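/- G admits the presentation ⟨A, B | [[Aᵖ, Bᵖ], Bᵖ], [[Bᵖ, A²ᵖ], A²ᵖ] for all p = 2ᵏ, k ≥ 0⟩: the group presented by two generators A, B subject to this infinite family of relators is isomorphic to G via the homomorphism sending A to a and B to b. -/

import Mathlib

-- The generators `a` and `b` of the iterated monodromy group of `z^2-1`,
-- as functions on binary words (`false` = x = left, `true` = y = right),
-- defined by mutual recursion.
mutual
def aFun : List Bool → List Bool
  | [] => []
  | false :: w => true :: bFun w
  | true :: w => false :: w

def bFun : List Bool → List Bool
  | [] => []
  | false :: w => false :: aFun w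
  | true :: w => true :: w
end

-- The inverses of `aFun`/`bFun`.
mutual
def aInv : List Bool → List Bool
  | [] => []
  | true :: w => false :: bInv w
  | false :: w => true :: w

def bInv : List Bool → List Bool
  | [] => []
  | false :: w => false :: aInv w
  | true :: w => true :: w
end

mutual
theorem aFun_aInv : ∀ w, aFun (aInv w) = w
  | [] => rfl
  | true :: w => by simp [aInv, aFun, bFun_bInv w]
  | false :: w => by simp [aInv, aFun]

theorem bFun_bInv : ∀ w, bFun (bInv w) = w
  | [] => rfl
  | false :: w => by simp [bInv, bFun, aFun_aInv w]
  | true :: w => by simp [bInv, bFun]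
end

mutual
theorem aInv_aFun : ∀ w, aInv (aFun w) = w
  | [] => rfl
  | false :: w => by simp [aFun, aInv, bInv_bFun w]
  | true :: w => by simp [aFun, aInv]

theorem bInv_bFun : ∀ w, bInv (bFun w) = w
  | [] => rfl
  | false :: w => by simp [bFun, bInv, aInv_aFun w]
  | true :: w => by simp [bFun, bInv]
end

/-- `a` as a permutation of the set of binary words. -/
def aPerm : Equiv.Perm (List Bool) := ⟨aFun, aInv, aInv_aFun, aFun_aInv⟩
/-- `b` as a permutation of the set of binary words. -/
def bPerm : Equiv.Perm (List Bool) := ⟨bFun, bInv, bInv_bFun, bFun_bInv⟩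

mutual
theorem aFun_length : ∀ w, (aFun w).length = w.length
  | [] => rfl
  | false :: w => by simp [aFun, bFun_length w]
  | true :: w => by simp [aFun]

theorem bFun_length : ∀ w, (bFun w).length = w.length
  | [] => rfl
  | false :: w => by simp [bFun, aFun_length w]
  | true :: w => by simp [bFun]
end

mutual
theorem aFun_prefix : ∀ u v, u <+: v → aFun u <+: aFun v
  | [], v, _ => by simp [aFun]
  | false :: u, false :: v, h => by
      simp only [List.cons_prefix_cons] at h
      simpa [aFun, List.cons_prefix_cons] using bFun_prefix u v h.2
  | true :: u, true :: v, h => by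
      simp only [List.cons_prefix_cons] at h
      simpa [aFun, List.cons_prefix_cons] using h.2
  | false :: u, true :: v, h => by simp [List.cons_prefix_cons] at h
  | true :: u, false :: v, h => by simp [List.cons_prefix_cons] at h
  | _ :: u, [], h => by simp at h

theorem bFun_prefix : ∀ u v, u <+: v → bFun u <+: bFun v
  | [], v, _ => by simp [bFun]
  | false :: u, false :: v, h => by
      simp only [List.cons_prefix_cons] at h
      simpa [bFun, List.cons_prefix_cons] using aFun_prefix u v h.2
  | true :: u, true :: v, h => by
      simp only [List.cons_prefix_cons] at h
      simpa [bFun, List.cons_prefix_cons] using h.2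
  | false :: u, true :: v, h => by simp [List.cons_prefix_cons] at h
  | true :: u, false :: v, h => by simp [List.cons_prefix_cons] at h
  | _ :: u, [], h => by simp at h
end

/-- The group of automorphisms of the binary rooted tree: bijections of the set of
binary words preserving word length and the prefix relation. -/
def treeAut : Subgroup (Equiv.Perm (List Bool)) where
  carrier := {f | (∀ w, (f w).length = w.length) ∧ ∀ u v : List Bool, u <+: v → f u <+: f v}
  one_mem' := ⟨fun _ => rfl, fun _ _ h => h⟩
  mul_mem' := by
    rintro f g ⟨hf1, hf2⟩ ⟨hg1, hg2⟩
    exact ⟨fun w => (hf1 _).trans (hg1 w), fun u v h => hf2 _ _ (hg2 _ _ h)⟩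
  inv_mem' := by
    rintro f ⟨hf1, hf2⟩
    constructor
    · intro w
      have := hf1 (f⁻¹ w)
      simpa using this.symm
    · intro u v h
      have hlen : (f⁻¹ u).length ≤ (f⁻¹ v).length := by
        have h1 : (f⁻¹ u).length = u.length := by have := hf1 (f⁻¹ u); simpa using this.symm
        have h2 : (f⁻¹ v).length = v.length := by have := hf1 (f⁻¹ v); simpa using this.symm
        rw [h1, h2]; exact h.length_le
      set p := (f⁻¹ v).take (f⁻¹ u).length with hp
      have hpv : p <+: f⁻¹ v := List.take_prefix _ _
      have hplen : p.length = (f⁻¹ u).length := by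
        simp only [hp, List.length_take]; omega
      have hfp : f p <+: v := by
        have := hf2 _ _ hpv
        simpa using this
      have hfplen : (f p).length = u.length := by
        rw [hf1 p, hplen]
        have := hf1 (f⁻¹ u); simpa using this.symm
      have : f p = u := by
        rcases List.prefix_or_prefix_of_prefix hfp h with h' | h'
        · exact h'.eq_of_length hfplen
        · exact (h'.eq_of_length hfplen.symm).symm
      have : p = f⁻¹ u := by
        have := congrArg (f⁻¹ : Equiv.Perm (List Bool)) this
        simpa using this
      rw [← this]; exact hpv

/-- The generator `a` as a tree automorphism. -/
def A : treeAut := ⟨aPerm, aFun_length, aFun_prefix⟩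
/-- The generator `b` as a tree automorphism. -/
def B : treeAut := ⟨bPerm, bFun_length, bFun_prefix⟩

/-- The iterated monodromy group of `z ↦ z² - 1`: the subgroup of the automorphism
group of the binary rooted tree generated by `a` and `b`. -/
def G : Subgroup treeAut := Subgroup.closure {A, B}

/-- Apply a tree automorphism to a binary word. -/
def app (g : treeAut) (w : List Bool) : List Bool := g.val w

/-- The commutator `[g,h] = g⁻¹h⁻¹gh`. -/
def pcomm {H : Type*} [Group H] (g h : H) : H := g⁻¹ * h⁻¹ * g * h

/-- The relators `[[Aᵖ,Bᵖ],Bᵖ]` and `[[Bᵖ,A²ᵖ],A²ᵖ]`, `p = 2ᵏ`, in the free group on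
two generators (`false` standing for `A`, `true` for `B`). -/
def rels : Set (FreeGroup Bool) :=
  {r | ∃ k : ℕ,
    r = pcomm (pcomm ((FreeGroup.of false) ^ 2 ^ k) ((FreeGroup.of true) ^ 2 ^ k))
          ((FreeGroup.of true) ^ 2 ^ k) ∨
    r = pcomm (pcomm ((FreeGroup.of true) ^ 2 ^ k) ((FreeGroup.of false) ^ (2 * 2 ^ k)))
          ((FreeGroup.of false) ^ (2 * 2 ^ k))}

/-- `a` as an element of `G`. -/
def AG : G := ⟨A, Subgroup.subset_closure (Set.mem_insert _ _)⟩
/-- `b` as an element of `G`. -/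
def BG : G := ⟨B, Subgroup.subset_closure (Set.mem_insert_of_mem _ rfl)⟩

section S1

abbrev TA := ↥treeAut

/-- Apply the underlying permutation. -/
abbrev tap (f : TA) (w : List Bool) : List Bool := (f : Equiv.Perm (List Bool)) w

lemma tap_len (f : TA) (w : List Bool) : (tap f w).length = w.length := f.2.1 w
lemma tap_pref (f : TA) {u v : List Bool} (h : u <+: v) : tap f u <+: tap f v := f.2.2 u v h

/-- The pair composition function. -/
def pairFun (s : Bool) (f g : List Bool → List Bool) : List Bool → List Bool
  | [] => []
  | c :: v => (xor c s) :: (cond c (g v) (f v))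

@[simp] lemma pairFun_nil (s f g) : pairFun s f g [] = [] := rfl
@[simp] lemma pairFun_cons (s f g) (c : Bool) (v : List Bool) :
    pairFun s f g (c :: v) = (xor c s) :: (cond c (g v) (f v)) := rfl

/-- The tree automorphism acting as `f` on the left subtree and `g` on the right subtree,
with a swap of the two subtrees if `s = true` (matching `a = σ(b,1)` conventions). -/
def Pear (s : Bool) (f g : TA) : TA := by
  refine ⟨⟨pairFun s (tap f) (tap g),
      pairFun s (cond s (tap g⁻¹) (tap f⁻¹)) (cond s (tap f⁻¹) (tap g⁻¹)), ?_, ?_⟩, ?_, ?_⟩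
  · intro w
    rcases w with _ | ⟨c, v⟩
    · rfl
    · cases c <;> cases s <;>
        simp [pairFun, tap]
  · intro w
    rcases w with _ | ⟨c, v⟩
    · rfl
    · cases c <;> cases s <;>
        simp [pairFun, tap]
  · intro w
    rcases w with _ | ⟨c, v⟩
    · rfl
    · cases c <;> simp [pairFun, tap_len]
  · intro u v h
    rcases u with _ | ⟨c, u'⟩
    · simpa [pairFun] using List.nil_prefix _
    · rcases v with _ | ⟨c', v'⟩
      · simp at h
      · rw [List.cons_prefix_cons] at h
        obtain ⟨rfl, h2⟩ := h
        cases c <;> simpa [pairFun, List.cons_prefix_cons] using tap_pref _ h2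

@[simp] lemma tap_Pear_nil (s : Bool) (f g : TA) : tap (Pear s f g) [] = [] := rfl

@[simp] lemma tap_Pear_cons (s : Bool) (f g : TA) (c : Bool) (v : List Bool) :
    tap (Pear s f g) (c :: v) = (xor c s) :: (cond c (tap g v) (tap f v)) := rfl

@[simp] lemma tap_mul (f g : TA) (w : List Bool) : tap (f * g) w = tap f (tap g w) := rfl

@[simp] lemma tap_one (w : List Bool) : tap (1 : TA) w = w := rfl

lemma TA_ext {f g : TA} (h : ∀ w, tap f w = tap g w) : f = g := by
  apply Subtype.ext
  exact Equiv.ext h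

lemma Pear_mul (s t : Bool) (f g f' g' : TA) :
    Pear s f g * Pear t f' g' =
      Pear (xor s t) (cond t g f * f') (cond t f g * g') := by
  apply TA_ext
  intro w
  rcases w with _ | ⟨c, v⟩
  · rfl
  · cases c <;> cases t <;> cases s <;> simp [pairFun]

lemma Pear_one : Pear false 1 1 = 1 := by
  apply TA_ext
  intro w
  rcases w with _ | ⟨c, v⟩
  · rfl
  · cases c <;> simp

lemma Pear_inv_F (f g : TA) : (Pear false f g)⁻¹ = Pear false f⁻¹ g⁻¹ := by
  apply inv_eq_of_mul_eq_one_right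
  rw [Pear_mul]
  simpa using Pear_one

lemma Pear_inv_T (f g : TA) : (Pear true f g)⁻¹ = Pear true g⁻¹ f⁻¹ := by
  apply inv_eq_of_mul_eq_one_right
  rw [Pear_mul]
  simpa using Pear_one

lemma A_eq : A = Pear true B 1 := by
  apply TA_ext
  intro w
  rcases w with _ | ⟨c, v⟩
  · rfl
  · cases c <;> simp [A, Pear, aPerm, pairFun, aFun, tap, B, bPerm]

lemma B_eq : B = Pear false A 1 := by
  apply TA_ext
  intro w
  rcases w with _ | ⟨c, v⟩
  · rfl
  · cases c <;> simp [A, Pear, aPerm, pairFun, bFun, tap, B, bPerm]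

lemma pcomm_Pear_F (x y x' y' : TA) :
    pcomm (Pear false x y) (Pear false x' y') = Pear false (pcomm x x') (pcomm y y') := by
  simp [pcomm, Pear_inv_F, Pear_mul]

@[simp] lemma pcomm_one_left {H : Type*} [Group H] (x : H) : pcomm 1 x = 1 := by
  simp [pcomm]

@[simp] lemma pcomm_one_right {H : Type*} [Group H] (x : H) : pcomm x 1 = 1 := by
  simp [pcomm]

@[simp] lemma pcomm_self {H : Type*} [Group H] (x : H) : pcomm x x = 1 := by
  simp [pcomm]

lemma Pear_F_pow (f g : TA) (n : ℕ) : (Pear false f g) ^ n = Pear false (f ^ n) (g ^ n) := by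
  induction n with
  | zero => simpa using Pear_one.symm
  | succ n ih => rw [pow_succ, pow_succ, pow_succ, ih, Pear_mul]; simp

lemma B_pow (n : ℕ) : B ^ n = Pear false (A ^ n) 1 := by
  rw [B_eq, Pear_F_pow, one_pow]

lemma A_sq : A ^ 2 = Pear false B B := by
  rw [pow_two, A_eq, Pear_mul]
  simp

lemma A_pow_even (p : ℕ) : A ^ (2 * p) = Pear false (B ^ p) (B ^ p) := by
  rw [pow_mul, A_sq, Pear_F_pow]

lemma rel_one_base : pcomm (pcomm A B) B = 1 := by
  apply TA_ext
  intro w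
  rcases w with _ | ⟨c, v⟩
  · rfl
  · cases c <;>
      simp [pcomm, A, B, tap, aPerm, bPerm, Equiv.Perm.inv_def, aFun, bFun, aInv, bInv,
        aFun_aInv, aInv_aFun, bFun_bInv, bInv_bFun]

lemma rel_step2 (q : ℕ) (h : pcomm (pcomm (A ^ q) (B ^ q)) (B ^ q) = 1) :
    pcomm (pcomm (B ^ q) (A ^ (2 * q))) (A ^ (2 * q)) = 1 := by
  rw [B_pow q, A_pow_even q, pcomm_Pear_F, pcomm_Pear_F]
  simp only [pcomm_one_left]
  rw [h]
  exact Pear_one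

lemma rel_step1 (p : ℕ) (h : pcomm (pcomm (B ^ p) (A ^ (2 * p))) (A ^ (2 * p)) = 1) :
    pcomm (pcomm (A ^ (2 * p)) (B ^ (2 * p))) (B ^ (2 * p)) = 1 := by
  rw [A_pow_even p, B_pow (2 * p), pcomm_Pear_F, pcomm_Pear_F]
  simp only [pcomm_one_right, pcomm_one_left, pcomm_self]
  rw [h]
  exact Pear_one

lemma rel1_hold (k : ℕ) : pcomm (pcomm (A ^ 2 ^ k) (B ^ 2 ^ k)) (B ^ 2 ^ k) = 1 := by
  induction k with
  | zero => simpa using rel_one_base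
  | succ k ih =>
    have h2 : (2 : ℕ) ^ (k + 1) = 2 * 2 ^ k := by ring
    rw [h2]
    exact rel_step1 _ (rel_step2 _ ih)

lemma rel2_hold (k : ℕ) :
    pcomm (pcomm (B ^ 2 ^ k) (A ^ (2 * 2 ^ k))) (A ^ (2 * 2 ^ k)) = 1 :=
  rel_step2 _ (rel1_hold k)

end S1
section S3

abbrev FB := FreeGroup Bool

/-- `a` as free group generator. -/
abbrev fa : FB := FreeGroup.of false
/-- `b` as free group generator. -/
abbrev fb : FB := FreeGroup.of true

/-- Elements of the abstract wreath-type group: a pair of free-group elements plus a twist. -/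
@[ext] structure WG where
  l : FB
  r : FB
  s : Bool

namespace WG

instance : Mul WG := ⟨fun x y => ⟨(cond y.s x.r x.l) * y.l, (cond y.s x.l x.r) * y.r, xor x.s y.s⟩⟩
instance : One WG := ⟨⟨1, 1, false⟩⟩
instance : Inv WG := ⟨fun x => ⟨cond x.s x.r⁻¹ x.l⁻¹, cond x.s x.l⁻¹ x.r⁻¹, x.s⟩⟩

lemma mul_def (x y : WG) :
    x * y = ⟨(cond y.s x.r x.l) * y.l, (cond y.s x.l x.r) * y.r, xor x.s y.s⟩ := rfl

lemma one_def : (1 : WG) = ⟨1, 1, false⟩ := rfl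

lemma inv_def (x : WG) : x⁻¹ = ⟨cond x.s x.r⁻¹ x.l⁻¹, cond x.s x.l⁻¹ x.r⁻¹, x.s⟩ := rfl

instance : Group WG where
  mul_assoc x y z := by
    obtain ⟨xl, xr, xs⟩ := x
    obtain ⟨yl, yr, ys⟩ := y
    obtain ⟨zl, zr, zs⟩ := z
    cases ys <;> cases zs <;> simp [mul_def, mul_assoc]
  one_mul x := by
    obtain ⟨xl, xr, xs⟩ := x
    cases xs <;> simp [mul_def, one_def]
  mul_one x := by
    obtain ⟨xl, xr, xs⟩ := x
    simp [mul_def, one_def]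
  inv_mul_cancel x := by
    obtain ⟨xl, xr, xs⟩ := x
    cases xs <;> simp [mul_def, inv_def, one_def]

@[simp] lemma mul_s (x y : WG) : (x * y).s = xor x.s y.s := rfl

end WG

/-- The wreath recursion on the free group. -/
def Phi : FB →* WG := FreeGroup.lift (fun x => cond x ⟨fa, 1, false⟩ ⟨fb, 1, true⟩)

@[simp] lemma Phi_fa : Phi fa = ⟨fb, 1, true⟩ := FreeGroup.lift_apply_of
@[simp] lemma Phi_fb : Phi fb = ⟨fa, 1, false⟩ := FreeGroup.lift_apply_of

lemma Phi_fa_inv : Phi fa⁻¹ = ⟨1, fb⁻¹, true⟩ := by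
  rw [map_inv, Phi_fa, WG.inv_def]; simp

lemma Phi_fb_inv : Phi fb⁻¹ = ⟨fa⁻¹, 1, false⟩ := by
  rw [map_inv, Phi_fb, WG.inv_def]; simp

/-- The substitution `a ↦ b`, `b ↦ a²`. -/
def sigF : FB →* FB := FreeGroup.lift (fun x => cond x (fa * fa) fb)

@[simp] lemma sigF_fa : sigF fa = fb := FreeGroup.lift_apply_of
@[simp] lemma sigF_fb : sigF fb = fa * fa := FreeGroup.lift_apply_of

/-- The substitution `a ↦ 1`, `b ↦ b`. -/
def delF : FB →* FB := FreeGroup.lift (fun x => cond x fb 1)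

@[simp] lemma delF_fa : delF fa = 1 := FreeGroup.lift_apply_of
@[simp] lemma delF_fb : delF fb = fb := FreeGroup.lift_apply_of

/-- Untwisted pairs give a homomorphism into `WG`. -/
def pairHomW : FB × FB →* WG where
  toFun x := ⟨x.1, x.2, false⟩
  map_one' := rfl
  map_mul' x y := by simp [WG.mul_def]

lemma Phi_sigF (u : FB) : Phi (sigF u) = ⟨u, delF u, false⟩ := by
  have h : Phi.comp sigF = pairHomW.comp ((MonoidHom.id FB).prod delF) := by
    apply FreeGroup.ext_hom
    intro c
    cases c <;>
      simp [pairHomW, sigF, delF, Phi, FreeGroup.lift_apply_of, WG.mul_def, WG.one_def]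
  have := DFunLike.congr_fun h u
  simpa [pairHomW] using this

/-- The evaluation homomorphism to tree automorphisms. -/
def phiTA : FB →* TA := FreeGroup.lift (fun x => cond x B A)

@[simp] lemma phiTA_fa : phiTA fa = A := FreeGroup.lift_apply_of
@[simp] lemma phiTA_fb : phiTA fb = B := FreeGroup.lift_apply_of

/-- The realization of `WG` on tree automorphisms. -/
def piTA : WG →* TA where
  toFun x := Pear x.s (phiTA x.l) (phiTA x.r)
  map_one' := by simpa [WG.one_def] using Pear_one
  map_mul' x y := by
    obtain ⟨xl, xr, xs⟩ := x
    obtain ⟨yl, yr, ys⟩ := y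
    cases ys <;> simp [WG.mul_def, Pear_mul, map_mul]

lemma piTA_Phi (w : FB) : piTA (Phi w) = phiTA w := by
  have h : piTA.comp Phi = phiTA := by
    apply FreeGroup.ext_hom
    intro c
    cases c
    · simpa [piTA, Phi, phiTA, FreeGroup.lift_apply_of] using A_eq.symm
    · simpa [piTA, Phi, phiTA, FreeGroup.lift_apply_of] using B_eq.symm
  exact DFunLike.congr_fun h w

lemma Pear_eq_one {s : Bool} {f g : TA} (h : Pear s f g = 1) :
    s = false ∧ f = 1 ∧ g = 1 := by
  have hs : s = false := by
    have := congrArg (fun x : TA => tap x [false]) h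
    have hf : tap f [] = [] := List.length_eq_zero_iff.mp (tap_len f [])
    simpa [hf] using this
  subst hs
  refine ⟨rfl, ?_, ?_⟩
  · apply TA_ext
    intro w
    have := congrArg (fun x : TA => tap x (false :: w)) h
    simpa using this
  · apply TA_ext
    intro w
    have := congrArg (fun x : TA => tap x (true :: w)) h
    simpa using this

lemma phiTA_trivial_parts {w : FB} (h : phiTA w = 1) :
    (Phi w).s = false ∧ phiTA (Phi w).l = 1 ∧ phiTA (Phi w).r = 1 := by
  have h2 : piTA (Phi w) = 1 := by rw [piTA_Phi]; exact h
  exact Pear_eq_one h2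

end S3
section S4

lemma map_pcomm {G H : Type*} [Group G] [Group H] (f : G →* H) (x y : G) :
    f (pcomm x y) = pcomm (f x) (f y) := by simp [pcomm]

open scoped commutatorElement in
lemma pcomm_eq_one_iff {G : Type*} [Group G] {g h : G} : pcomm g h = 1 ↔ Commute g h := by
  have h1 : pcomm g h = ⁅g⁻¹, h⁻¹⁆ := by
    simp [pcomm, commutatorElement_def]
  rw [h1, commutatorElement_eq_one_iff_commute, Commute.inv_left_iff, Commute.inv_right_iff]

lemma commute_conj {G : Type*} [Group G] {x y : G} (g : G) (h : Commute x y) :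
    Commute (g * x * g⁻¹) (g * y * g⁻¹) := by
  simpa using h.map (MulAut.conj g).toMonoidHom

lemma conj_eq_of_commute {G : Type*} [Group G] {x g : G} (h : Commute x g) :
    g⁻¹ * x * g = x := by
  rw [mul_assoc, h.eq, inv_mul_cancel_left]

lemma conj_eq_of_commute' {G : Type*} [Group G] {g x : G} (h : Commute g x) :
    g * x * g⁻¹ = x := by
  rw [h.eq, mul_inv_cancel_right]

lemma commute_of_conj {G : Type*} [Group G] {x y : G} (g : G)
    (h : Commute (g⁻¹ * x * g) y) : Commute x (g * y * g⁻¹) := by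
  have h2 := commute_conj g h
  have h3 : g * (g⁻¹ * x * g) * g⁻¹ = x := by group
  rwa [h3] at h2

/-- The normal closure of the relators. -/
def N0 : Subgroup FB := Subgroup.normalClosure rels

instance : N0.Normal := Subgroup.normalClosure_normal

/-- The presented group as a quotient. -/
abbrev Q0 := FB ⧸ N0

def mkN : FB →* Q0 := QuotientGroup.mk' N0

def aQ : Q0 := mkN fa
def bQ : Q0 := mkN fb
def tQ : Q0 := mkN (fa * fb * fa⁻¹)

def betaQ (m : ℤ) : Q0 := aQ ^ m * bQ * aQ ^ (-m)

@[simp] lemma betaQ_zero : betaQ 0 = bQ := by simp [betaQ]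

lemma tQ_eq : tQ = betaQ 1 := by
  simp [tQ, betaQ, aQ, bQ, map_mul, map_inv]

lemma mem_N0_iff {x : FB} : mkN x = 1 ↔ x ∈ N0 := QuotientGroup.eq_one_iff x

lemma mkN_rel1 (k : ℕ) :
    pcomm (pcomm (aQ ^ (2 ^ k : ℕ)) (bQ ^ (2 ^ k : ℕ))) (bQ ^ (2 ^ k : ℕ)) = 1 := by
  have hm : pcomm (pcomm (fa ^ (2 ^ k)) (fb ^ (2 ^ k))) (fb ^ (2 ^ k)) ∈ rels :=
    ⟨k, Or.inl rfl⟩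
  have h := mem_N0_iff.2 (Subgroup.subset_normalClosure hm)
  simpa [map_pcomm, map_pow, aQ, bQ] using h

lemma mkN_rel2 (k : ℕ) :
    pcomm (pcomm (bQ ^ (2 ^ k : ℕ)) (aQ ^ (2 * 2 ^ k : ℕ))) (aQ ^ (2 * 2 ^ k : ℕ)) = 1 := by
  have hm : pcomm (pcomm (fb ^ (2 ^ k)) (fa ^ (2 * 2 ^ k))) (fa ^ (2 * 2 ^ k)) ∈ rels :=
    ⟨k, Or.inr rfl⟩
  have h := mem_N0_iff.2 (Subgroup.subset_normalClosure hm)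
  simpa [map_pcomm, map_pow, aQ, bQ] using h

lemma comm_conj_adj : Commute (aQ⁻¹ * bQ * aQ) bQ := by
  have h0 : pcomm (pcomm aQ bQ) bQ = 1 := by
    have := mkN_rel1 0
    simpa using this
  have h1 : Commute (pcomm aQ bQ) bQ := pcomm_eq_one_iff.1 h0
  have h2 : pcomm aQ bQ = (aQ⁻¹ * bQ⁻¹ * aQ) * bQ := by simp [pcomm, mul_assoc]
  rw [h2] at h1
  have h3 : Commute (aQ⁻¹ * bQ⁻¹ * aQ) bQ := by
    have h4 := h1.mul_left ((Commute.refl bQ).inv_left)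
    simpa [mul_inv_cancel_right] using h4
  have h5 := h3.inv_left
  simpa [mul_inv_rev, mul_assoc] using h5

lemma conj_betaQ (m j : ℤ) : aQ ^ m * betaQ j * aQ ^ (-m) = betaQ (j + m) := by
  simp only [betaQ]
  group

lemma comm_beta_adj (m : ℤ) : Commute (betaQ m) (betaQ (m + 1)) := by
  have base : Commute (betaQ (-1)) (betaQ 0) := by
    have := comm_conj_adj
    simpa [betaQ, zpow_neg, zpow_one] using this
  have h := commute_conj (aQ ^ (m + 1)) base
  rw [show (aQ ^ (m+1))⁻¹ = aQ ^ (-(m+1)) by rw [← zpow_neg]] at h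
  rwa [conj_betaQ (m+1) (-1), conj_betaQ (m+1) 0, show (-1 : ℤ) + (m+1) = m by ring,
    show (0 : ℤ) + (m+1) = m+1 by ring] at h

def dQ (m : ℤ) : Q0 := (betaQ m)⁻¹ * betaQ (m - 2)

lemma comm_d0 : Commute (dQ 0) (aQ ^ (2 : ℤ)) := by
  have h0 : pcomm (pcomm bQ (aQ ^ (2 : ℕ))) (aQ ^ (2 : ℕ)) = 1 := by
    have := mkN_rel2 0
    simpa using this
  have h1 : Commute (pcomm bQ (aQ ^ (2 : ℕ))) (aQ ^ (2 : ℕ)) := pcomm_eq_one_iff.1 h0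
  have h2 : pcomm bQ (aQ ^ (2 : ℕ)) = dQ 0 := by
    simp only [pcomm, dQ, betaQ]
    group
  have h3 : (aQ ^ (2 : ℕ)) = aQ ^ (2 : ℤ) := by
    rw [← zpow_natCast]; norm_num
  rw [h2, h3] at h1
  exact h1

lemma dQ_conj (m : ℤ) : dQ m = aQ ^ m * dQ 0 * aQ ^ (-m) := by
  simp only [dQ, betaQ]
  group

lemma dQ_shift (m : ℤ) : dQ m = dQ (m - 2) := by
  have h1 : aQ ^ (-2 : ℤ) * dQ 0 * aQ ^ (2 : ℤ) = dQ 0 := by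
    have := conj_eq_of_commute comm_d0
    simpa [zpow_neg] using this
  rw [dQ_conj m, dQ_conj (m - 2)]
  calc aQ ^ m * dQ 0 * aQ ^ (-m)
      = aQ ^ (m-2) * (aQ ^ (2:ℤ) * dQ 0 * aQ ^ (-2:ℤ)) * aQ ^ (-(m-2)) := by group
    _ = aQ ^ (m-2) * dQ 0 * aQ ^ (-(m-2)) := by
        have h2 : aQ ^ (2:ℤ) * dQ 0 * aQ ^ (-2:ℤ) = dQ 0 := by
          have := conj_eq_of_commute' comm_d0.symm
          simpa [zpow_neg] using this
        rw [h2]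

lemma dQ_shift' (m : ℤ) : dQ (m + 2) = dQ m := by
  have := dQ_shift (m + 2)
  simpa using this

lemma dQ_odd : ∀ j : ℤ, dQ (2 * j + 1) = dQ 1 := by
  intro j
  induction j using Int.induction_on with
  | zero => norm_num
  | succ n ih =>
    have h1 : (2 * ((n : ℤ) + 1) + 1) = (2 * n + 1) + 2 := by ring
    rw [h1, dQ_shift' (2 * (n:ℤ) + 1), ih]
  | pred n ih =>
    have h1 : (2 * (-(n : ℤ) - 1) + 1) = (2 * (-(n:ℤ)) + 1) - 2 := by ring
    rw [h1, ← dQ_shift (2 * (-(n:ℤ)) + 1), ih]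

lemma beta_step (m : ℤ) : betaQ m = betaQ (m - 2) * (dQ m)⁻¹ := by
  simp [dQ, mul_inv_rev, mul_assoc]

lemma beta_step' (m : ℤ) : betaQ (m - 2) = betaQ m * dQ m := by
  simp [dQ, mul_assoc]

lemma comm_b_d1 : Commute bQ (dQ 1) := by
  have h1 : Commute bQ (betaQ 1) := by
    have := comm_beta_adj 0
    simpa using this
  have h2 : Commute bQ (betaQ (-1)) := by
    have := comm_beta_adj (-1)
    simpa using this.symm
  have : dQ 1 = (betaQ 1)⁻¹ * betaQ (-1) := by norm_num [dQ]
  rw [this]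
  exact (h1.inv_right).mul_right h2

lemma CF : ∀ j : ℤ, Commute bQ (betaQ (2 * j + 1)) := by
  intro j
  induction j using Int.induction_on with
  | zero =>
    have := comm_beta_adj 0
    simpa using this
  | succ n ih =>
    have h1 : (2 * ((n:ℤ) + 1) + 1) = (2 * n + 1 + 2) := by ring
    rw [h1, beta_step (2 * (n:ℤ) + 1 + 2)]
    have h2 : (2 * (n:ℤ) + 1 + 2 - 2) = 2 * n + 1 := by ring
    have h3 : dQ (2 * (n:ℤ) + 1 + 2) = dQ 1 := by
      have h4 : (2 * (n:ℤ) + 1 + 2) = 2 * (n + 1) + 1 := by ring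
      rw [h4, dQ_odd]
    rw [h2, h3]
    exact ih.mul_right comm_b_d1.inv_right
  | pred n ih =>
    have h1 : (2 * (-(n:ℤ) - 1) + 1) = (2 * (-(n:ℤ)) + 1) - 2 := by ring
    rw [h1, beta_step' (2 * (-(n:ℤ)) + 1)]
    have h3 : dQ (2 * (-(n:ℤ)) + 1) = dQ 1 := dQ_odd (-(n:ℤ))
    rw [h3]
    exact ih.mul_right comm_b_d1

/-- `β(2m)` commutes with `t = β 1`. -/
lemma CF2 (m : ℤ) : Commute (betaQ (2 * m)) (betaQ 1) := by
  have h := CF (m - 1)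
  have h2 := commute_conj (aQ ^ (1:ℤ)) h
  rw [show (aQ ^ (1:ℤ))⁻¹ = aQ ^ (-1 : ℤ) by rw [← zpow_neg]] at h2
  have e0 : aQ ^ (1:ℤ) * bQ * aQ ^ (-1:ℤ) = betaQ 1 := by
    simp [betaQ]
  have e1 : aQ ^ (1:ℤ) * betaQ (2 * (m-1) + 1) * aQ ^ (-1:ℤ) = betaQ (2 * m) := by
    have := conj_betaQ 1 (2 * (m - 1) + 1)
    rw [this]
    congr 1
    ring
  rw [e0, e1] at h2
  exact h2.symm

end S4
section S5

/-- Conjugation of the substitution `σ` by `a` : `z ↦ a σ(z) a⁻¹`. -/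
def psiF : FB →* FB := (MulAut.conj fa).toMonoidHom.comp sigF

def psiQ : FB →* Q0 := mkN.comp psiF

lemma psiF_fa : psiF fa = fa * fb * fa⁻¹ := by
  simp [psiF, MulAut.conj_apply]

lemma psiF_fb : psiF fb = fa * (fa * fa) * fa⁻¹ := by
  simp [psiF, MulAut.conj_apply]

lemma psiQ_fa : psiQ fa = tQ := by
  simp only [psiQ, MonoidHom.comp_apply, psiF_fa]
  rfl

lemma psiQ_fb : psiQ fb = aQ * aQ := by
  simp only [psiQ, MonoidHom.comp_apply, psiF_fb]
  have h : fa * (fa * fa) * fa⁻¹ = fa * fa := by group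
  rw [h, map_mul]
  rfl

lemma claim_K1' : ∀ c : FB, ∀ m : ℤ, ∃ m' : ℤ,
    (psiQ c)⁻¹ * betaQ (2 * m) * psiQ c = betaQ (2 * m') := by
  intro c
  induction c using FreeGroup.induction_on with
  | C1 => intro m; exact ⟨m, by simp⟩
  | of x =>
    intro m
    cases x with
    | false =>
      refine ⟨m, ?_⟩
      have h : Commute (betaQ (2 * m)) tQ := by rw [tQ_eq]; exact CF2 m
      have := conj_eq_of_commute h
      show (psiQ fa)⁻¹ * betaQ (2 * m) * psiQ fa = _
      rwa [psiQ_fa]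
    | true =>
      refine ⟨m - 1, ?_⟩
      show (psiQ fb)⁻¹ * betaQ (2 * m) * psiQ fb = _
      rw [psiQ_fb]
      simp only [betaQ]
      group
  | inv_of x _ =>
    intro m
    cases x with
    | false =>
      refine ⟨m, ?_⟩
      have h : Commute (betaQ (2 * m)) tQ := by rw [tQ_eq]; exact CF2 m
      show (psiQ (fa⁻¹))⁻¹ * betaQ (2 * m) * psiQ (fa⁻¹) = _
      rw [map_inv, psiQ_fa, inv_inv]
      exact conj_eq_of_commute' h.symm
    | true =>
      refine ⟨m + 1, ?_⟩
      show (psiQ (fb⁻¹))⁻¹ * betaQ (2 * m) * psiQ (fb⁻¹) = _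
      rw [map_inv, psiQ_fb, inv_inv]
      simp only [betaQ]
      group
  | mul u v hu hv =>
    intro m
    obtain ⟨m1, h1⟩ := hu m
    obtain ⟨m2, h2⟩ := hv m1
    refine ⟨m2, ?_⟩
    rw [map_mul]
    calc (psiQ u * psiQ v)⁻¹ * betaQ (2 * m) * (psiQ u * psiQ v)
        = (psiQ v)⁻¹ * ((psiQ u)⁻¹ * betaQ (2 * m) * psiQ u) * psiQ v := by group
      _ = (psiQ v)⁻¹ * betaQ (2 * m1) * psiQ v := by rw [h1]
      _ = betaQ (2 * m2) := h2

/-- The normal closure of `a`, i.e. the kernel of `δ`. -/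
def KD : Subgroup FB := Subgroup.normalClosure {fa}

instance : KD.Normal := Subgroup.normalClosure_normal

lemma claim_B : ∀ z ∈ KD, Commute bQ (psiQ z) := by
  have hle : KD ≤ Subgroup.comap psiQ (Subgroup.centralizer {bQ}) := by
    have h0 : KD = Subgroup.closure (Group.conjugatesOfSet {fa}) := rfl
    rw [h0, Subgroup.closure_le]
    intro x hx
    rw [Group.mem_conjugatesOfSet_iff] at hx
    obtain ⟨y, hy, hconj⟩ := hx
    rw [Set.mem_singleton_iff] at hy
    subst hy
    rw [isConj_iff] at hconj
    obtain ⟨c, rfl⟩ := hconj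
    simp only [SetLike.mem_coe, Subgroup.mem_comap, Subgroup.mem_centralizer_iff]
    intro h hh
    rw [Set.mem_singleton_iff] at hh
    subst hh
    have hx2 : psiQ (c * fa * c⁻¹) = psiQ c * tQ * (psiQ c)⁻¹ := by
      rw [map_mul, map_mul, map_inv, psiQ_fa]
    rw [hx2]
    obtain ⟨m', hm'⟩ := claim_K1' c 0
    have h1 : Commute ((psiQ c)⁻¹ * bQ * psiQ c) tQ := by
      rw [show bQ = betaQ (2 * 0) by simp, hm', tQ_eq]
      exact CF2 m'
    exact (commute_of_conj (psiQ c) h1).eq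
  intro z hz
  have h3 := hle hz
  simp only [Subgroup.mem_comap, Subgroup.mem_centralizer_iff] at h3
  exact h3 bQ (Set.mem_singleton bQ)

end S5
section S6

abbrev F3 := FreeGroup (Fin 3)

def x1g : F3 := FreeGroup.of 0
def x2g : F3 := FreeGroup.of 1
def x3g : F3 := FreeGroup.of 2

/-- The embedding of the even subgroup's generators: `x1 ↦ b`, `x2 ↦ aba⁻¹`, `x3 ↦ a²`. -/
def iot : F3 →* FB := FreeGroup.lift ![fb, fa * fb * fa⁻¹, fa * fa]

def iotQ : F3 →* Q0 := mkN.comp iot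

@[simp] lemma iot_x1 : iot x1g = fb := FreeGroup.lift_apply_of
@[simp] lemma iot_x2 : iot x2g = fa * fb * fa⁻¹ := FreeGroup.lift_apply_of
@[simp] lemma iot_x3 : iot x3g = fa * fa := FreeGroup.lift_apply_of

lemma iotQ_x1 : iotQ x1g = bQ := rfl
lemma iotQ_x2 : iotQ x2g = tQ := rfl
lemma iotQ_x3 : iotQ x3g = psiQ fb := by
  have h : psiF fb = fa * fa := by rw [psiF_fb]; group
  show mkN (iot x3g) = mkN (psiF fb)
  rw [h, iot_x3]

lemma psiQ_conj_fa (z : FB) : psiQ (fa * z * fa⁻¹) = tQ * psiQ z * tQ⁻¹ := by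
  rw [map_mul, map_mul, map_inv, psiQ_fa]

lemma psiQ_conj_fa' (z : FB) : psiQ (fa⁻¹ * z * fa) = tQ⁻¹ * psiQ z * (tQ⁻¹)⁻¹ := by
  rw [map_mul, map_mul, map_inv, psiQ_fa, inv_inv]

lemma psiQ_conj_fb (z : FB) : psiQ (fb * z * fb⁻¹) = psiQ fb * psiQ z * (psiQ fb)⁻¹ := by
  rw [map_mul, map_mul, map_inv]

lemma psiQ_conj_fb' (z : FB) : psiQ (fb⁻¹ * z * fb) = (psiQ fb)⁻¹ * psiQ z * ((psiQ fb)⁻¹)⁻¹ := by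
  rw [map_mul, map_mul, map_inv, inv_inv]

lemma KD_conj (z : FB) (hz : z ∈ KD) (g : FB) : g * z * g⁻¹ ∈ KD :=
  Subgroup.normalClosure_normal.conj_mem z hz g

lemma claim_M : ∀ w : F3, ∀ z ∈ KD, ∃ z' ∈ KD,
    iotQ w * psiQ z * (iotQ w)⁻¹ = psiQ z' := by
  intro w
  induction w using FreeGroup.induction_on with
  | C1 => intro z hz; exact ⟨z, hz, by simp⟩
  | of x =>
    intro z hz
    fin_cases x
    · refine ⟨z, hz, ?_⟩
      show iotQ x1g * psiQ z * (iotQ x1g)⁻¹ = psiQ z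
      rw [iotQ_x1]
      exact conj_eq_of_commute' (claim_B z hz)
    · refine ⟨fa * z * fa⁻¹, KD_conj z hz fa, ?_⟩
      show iotQ x2g * psiQ z * (iotQ x2g)⁻¹ = _
      rw [iotQ_x2, psiQ_conj_fa]
    · refine ⟨fb * z * fb⁻¹, KD_conj z hz fb, ?_⟩
      show iotQ x3g * psiQ z * (iotQ x3g)⁻¹ = _
      rw [iotQ_x3, psiQ_conj_fb]
  | inv_of x _ =>
    intro z hz
    fin_cases x
    · refine ⟨z, hz, ?_⟩
      show iotQ x1g⁻¹ * psiQ z * (iotQ x1g⁻¹)⁻¹ = psiQ z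
      rw [map_inv, iotQ_x1, inv_inv]
      exact conj_eq_of_commute (claim_B z hz).symm
    · refine ⟨fa⁻¹ * z * fa, ?_, ?_⟩
      · have := KD_conj z hz fa⁻¹
        simpa using this
      · show iotQ x2g⁻¹ * psiQ z * (iotQ x2g⁻¹)⁻¹ = _
        rw [map_inv, iotQ_x2, psiQ_conj_fa']
    · refine ⟨fb⁻¹ * z * fb, ?_, ?_⟩
      · have := KD_conj z hz fb⁻¹
        simpa using this
      · show iotQ x3g⁻¹ * psiQ z * (iotQ x3g⁻¹)⁻¹ = _
        rw [map_inv, iotQ_x3, psiQ_conj_fb']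
  | mul u v hu hv =>
    intro z hz
    obtain ⟨z1, hz1, h1⟩ := hv z hz
    obtain ⟨z2, hz2, h2⟩ := hu z1 hz1
    refine ⟨z2, hz2, ?_⟩
    rw [map_mul]
    calc iotQ u * iotQ v * psiQ z * (iotQ u * iotQ v)⁻¹
        = iotQ u * (iotQ v * psiQ z * (iotQ v)⁻¹) * (iotQ u)⁻¹ := by group
      _ = iotQ u * psiQ z1 * (iotQ u)⁻¹ := by rw [h1]
      _ = psiQ z2 := h2

lemma final_L2 (w : F3) : Commute bQ (iotQ w * tQ * (iotQ w)⁻¹) := by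
  have hfa : fa ∈ KD := Subgroup.subset_normalClosure rfl
  obtain ⟨z', hz', h⟩ := claim_M w fa hfa
  rw [← psiQ_fa, h]
  exact claim_B z' hz'

end S6
section S7

def xi1 : F3 →* FB := FreeGroup.lift ![fa, 1, fb]
def xi2 : F3 →* FB := FreeGroup.lift ![1, fb * fa * fb⁻¹, fb]

@[simp] lemma xi1_x1 : xi1 x1g = fa := FreeGroup.lift_apply_of
@[simp] lemma xi1_x2 : xi1 x2g = 1 := FreeGroup.lift_apply_of
@[simp] lemma xi1_x3 : xi1 x3g = fb := FreeGroup.lift_apply_of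
@[simp] lemma xi2_x1 : xi2 x1g = 1 := FreeGroup.lift_apply_of
@[simp] lemma xi2_x2 : xi2 x2g = fb * fa * fb⁻¹ := FreeGroup.lift_apply_of
@[simp] lemma xi2_x3 : xi2 x3g = fb := FreeGroup.lift_apply_of

/-- The two coordinates of `Φ ∘ ι` as a homomorphism into `WG`. -/
def JW : F3 →* WG where
  toFun d := ⟨xi1 d, xi2 d, false⟩
  map_one' := by simp [WG.one_def]
  map_mul' x y := by simp [WG.mul_def]

lemma Phi_iot (d : F3) : Phi (iot d) = ⟨xi1 d, xi2 d, false⟩ := by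
  have h : Phi.comp iot = JW := by
    apply FreeGroup.ext_hom
    intro c
    fin_cases c
    · show Phi (iot x1g) = JW x1g
      rw [iot_x1]
      simp [JW, WG.mul_def]
    · show Phi (iot x2g) = JW x2g
      rw [iot_x2]
      simp [JW, WG.mul_def, WG.inv_def, map_mul, map_inv]
    · show Phi (iot x3g) = JW x3g
      rw [iot_x3]
      simp [JW, WG.mul_def]
  exact DFunLike.congr_fun h d

/-- `ncl(x1)` in `F3`. -/
def K2 : Subgroup F3 := Subgroup.normalClosure {x1g}

instance : K2.Normal := Subgroup.normalClosure_normal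

def mkK2 : F3 →* F3 ⧸ K2 := QuotientGroup.mk' K2

def v2 : FB →* F3 ⧸ K2 :=
  FreeGroup.lift (fun c => cond c (mkK2 x3g) (mkK2 (x3g⁻¹ * x2g * x3g)))

lemma v2_fa : v2 fa = mkK2 (x3g⁻¹ * x2g * x3g) := FreeGroup.lift_apply_of
lemma v2_fb : v2 fb = mkK2 x3g := FreeGroup.lift_apply_of

lemma mem_K2_of_xi2 {d : F3} (h : xi2 d = 1) : d ∈ K2 := by
  have hcomp : v2.comp xi2 = mkK2 := by
    apply FreeGroup.ext_hom
    intro c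
    fin_cases c
    · show v2 (xi2 x1g) = mkK2 x1g
      rw [xi2_x1, map_one]
      symm
      exact (QuotientGroup.eq_one_iff _).2 (Subgroup.subset_normalClosure rfl)
    · show v2 (xi2 x2g) = mkK2 x2g
      rw [xi2_x2, map_mul, map_mul, map_inv, v2_fa, v2_fb, ← map_inv, ← map_mul, ← map_mul]
      congr 1
      group
    · show v2 (xi2 x3g) = mkK2 x3g
      rw [xi2_x3, v2_fb]
  have h2 : mkK2 d = 1 := by
    rw [← hcomp]
    simp [h]
  exact (QuotientGroup.eq_one_iff _).1 h2

/-- The commutation relators in `F3`. -/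
def SD3 : Set F3 := {r | ∃ w : F3, r = pcomm x1g (w * x2g * w⁻¹)}

def D3 : Subgroup F3 := Subgroup.normalClosure SD3

instance : D3.Normal := Subgroup.normalClosure_normal

def mkD : F3 →* F3 ⧸ D3 := QuotientGroup.mk' D3

lemma mkD_conj (g x : F3) : mkD (g * x * g⁻¹) = mkD g * mkD x * (mkD g)⁻¹ := by
  rw [map_mul, map_mul, map_inv]

lemma c1_base (w : F3) : Commute (mkD x1g) (mkD (w * x2g * w⁻¹)) := by
  rw [← pcomm_eq_one_iff, ← map_pcomm]
  exact (QuotientGroup.eq_one_iff _).2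
    (Subgroup.subset_normalClosure ⟨w, rfl⟩)

lemma c1_conj (u : F3) : Commute (mkD (u * x1g * u⁻¹)) (mkD x2g) := by
  have h := commute_conj (mkD u) (c1_base u⁻¹)
  have e1 : mkD u * mkD x1g * (mkD u)⁻¹ = mkD (u * x1g * u⁻¹) := by
    rw [map_mul, map_mul, map_inv]
  have e2 : mkD u * mkD (u⁻¹ * x2g * u⁻¹⁻¹) * (mkD u)⁻¹ = mkD x2g := by
    rw [← map_inv, ← map_mul, ← map_mul]
    congr 1
    group
  rwa [e1, e2] at h

def e13 : FB →* F3 := FreeGroup.lift (fun c => cond c x3g x1g)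

@[simp] lemma e13_fa : e13 fa = x1g := FreeGroup.lift_apply_of
@[simp] lemma e13_fb : e13 fb = x3g := FreeGroup.lift_apply_of

lemma xi1_e13 (y : FB) : xi1 (e13 y) = y := by
  have h : xi1.comp e13 = MonoidHom.id FB := by
    apply FreeGroup.ext_hom
    intro c
    cases c
    · show xi1 (e13 fa) = fa
      rw [e13_fa, xi1_x1]
    · show xi1 (e13 fb) = fb
      rw [e13_fb, xi1_x3]
  exact DFunLike.congr_fun h y

/-- The collapsing lemma: conjugates of `x1` are, modulo `D3`, conjugates by `{x1,x3}`-words. -/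
lemma conj_collapse : ∀ g : F3, ∀ t0 : FB, ∃ t : FB,
    mkD (g * (e13 t0 * x1g * (e13 t0)⁻¹) * g⁻¹) = mkD (e13 t * x1g * (e13 t)⁻¹) := by
  intro g
  induction g using FreeGroup.induction_on with
  | C1 =>
    intro t0
    refine ⟨t0, ?_⟩
    congr 1
    group
  | of x =>
    intro t0
    fin_cases x
    · refine ⟨fa * t0, ?_⟩
      show mkD (x1g * (e13 t0 * x1g * (e13 t0)⁻¹) * x1g⁻¹) = _
      rw [show e13 (fa * t0) = x1g * e13 t0 by rw [map_mul, e13_fa]]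
      congr 1
      group
    · refine ⟨t0, ?_⟩
      show mkD (x2g * (e13 t0 * x1g * (e13 t0)⁻¹) * x2g⁻¹) = _
      have hc : Commute (mkD x2g) (mkD (e13 t0 * x1g * (e13 t0)⁻¹)) := by
        rw [mkD_conj]
        exact (c1_conj (e13 t0)).symm
      rw [mkD_conj]
      exact conj_eq_of_commute' hc
    · refine ⟨fb * t0, ?_⟩
      show mkD (x3g * (e13 t0 * x1g * (e13 t0)⁻¹) * x3g⁻¹) = _
      rw [show e13 (fb * t0) = x3g * e13 t0 by rw [map_mul, e13_fb]]
      congr 1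
      group
  | inv_of x _ =>
    intro t0
    fin_cases x
    · refine ⟨fa⁻¹ * t0, ?_⟩
      show mkD (x1g⁻¹ * (e13 t0 * x1g * (e13 t0)⁻¹) * x1g⁻¹⁻¹) = _
      rw [show e13 (fa⁻¹ * t0) = x1g⁻¹ * e13 t0 by rw [map_mul, map_inv, e13_fa]]
      congr 1
      group
    · refine ⟨t0, ?_⟩
      show mkD (x2g⁻¹ * (e13 t0 * x1g * (e13 t0)⁻¹) * x2g⁻¹⁻¹) = _
      have hc : Commute (mkD x2g) (mkD (e13 t0 * x1g * (e13 t0)⁻¹)) := by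
        rw [mkD_conj]
        exact (c1_conj (e13 t0)).symm
      have hc2 : Commute (mkD x2g⁻¹) (mkD (e13 t0 * x1g * (e13 t0)⁻¹)) := by
        rw [map_inv]
        exact hc.inv_left
      rw [mkD_conj]
      exact conj_eq_of_commute' hc2
    · refine ⟨fb⁻¹ * t0, ?_⟩
      show mkD (x3g⁻¹ * (e13 t0 * x1g * (e13 t0)⁻¹) * x3g⁻¹⁻¹) = _
      rw [show e13 (fb⁻¹ * t0) = x3g⁻¹ * e13 t0 by rw [map_mul, map_inv, e13_fb]]
      congr 1
      group
  | mul u v hu hv =>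
    intro t0
    obtain ⟨t1, h1⟩ := hv t0
    obtain ⟨t, h⟩ := hu t1
    refine ⟨t, ?_⟩
    have e0 : mkD (u * v * (e13 t0 * x1g * (e13 t0)⁻¹) * (u * v)⁻¹)
        = mkD (u * (v * (e13 t0 * x1g * (e13 t0)⁻¹) * v⁻¹) * u⁻¹) := by
      congr 1
      group
    rw [e0, mkD_conj, h1, ← mkD_conj]
    exact h

lemma D3_le_ker_xi1 : D3 ≤ xi1.ker := by
  apply Subgroup.normalClosure_le_normal
  rintro r ⟨w, rfl⟩
  simp only [MonoidHom.mem_ker, SetLike.mem_coe, map_pcomm, map_mul, map_inv, xi1_x1, xi1_x2]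
  simp [pcomm]

lemma D3_le_comap_N0 : D3 ≤ N0.comap iot := by
  haveI : (N0.comap iot).Normal := Subgroup.normalClosure_normal.comap iot
  apply Subgroup.normalClosure_le_normal
  rintro r ⟨w, rfl⟩
  simp only [SetLike.mem_coe, Subgroup.mem_comap]
  rw [← mem_N0_iff, map_pcomm, map_pcomm, pcomm_eq_one_iff]
  have e1 : mkN (iot x1g) = bQ := rfl
  have e2 : mkN (iot (w * x2g * w⁻¹)) = iotQ w * tQ * (iotQ w)⁻¹ := by
    rw [map_mul, map_mul, map_inv, map_mul, map_mul, map_inv]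
    rfl
  rw [e1, e2]
  exact final_L2 w

/-- The main `F3`-level reduction: trivial coordinates imply membership in `N0`. -/
lemma F3_reduction {d : F3} (h1 : xi1 d = 1) (h2 : xi2 d = 1) : iot d ∈ N0 := by
  have hK2 : d ∈ K2 := mem_K2_of_xi2 h2
  -- step 1: mkD d is in the range of mkD ∘ e13
  have hrange : ∃ y : FB, mkD d = mkD (e13 y) := by
    have hle : K2 ≤ Subgroup.comap mkD (mkD.comp e13).range := by
      have h0 : K2 = Subgroup.closure (Group.conjugatesOfSet {x1g}) := rfl
      rw [h0, Subgroup.closure_le]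
      intro x hx
      rw [Group.mem_conjugatesOfSet_iff] at hx
      obtain ⟨y, hy, hconj⟩ := hx
      rw [Set.mem_singleton_iff] at hy
      subst hy
      rw [isConj_iff] at hconj
      obtain ⟨c, rfl⟩ := hconj
      simp only [SetLike.mem_coe, Subgroup.mem_comap, MonoidHom.mem_range]
      obtain ⟨t, ht⟩ := conj_collapse c 1
      refine ⟨t * fa * t⁻¹, ?_⟩
      have e : e13 (t * fa * t⁻¹) = e13 t * x1g * (e13 t)⁻¹ := by
        rw [map_mul, map_mul, map_inv, e13_fa]
      show mkD (e13 (t * fa * t⁻¹)) = _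
      rw [e, ← ht]
      congr 1
    have := hle hK2
    simp only [Subgroup.mem_comap, MonoidHom.mem_range] at this
    obtain ⟨y, hy⟩ := this
    exact ⟨y, hy.symm⟩
  obtain ⟨y, hy⟩ := hrange
  -- step 2: y must be trivial
  have hyd : (e13 y)⁻¹ * d ∈ D3 := QuotientGroup.eq.mp hy.symm
  have hy1 : y = 1 := by
    have h3 := D3_le_ker_xi1 hyd
    rw [MonoidHom.mem_ker, map_mul, map_inv, xi1_e13, h1, mul_one, inv_eq_one] at h3
    exact h3
  have hd : d ∈ D3 := by
    rw [hy1, map_one, map_one] at hy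
    exact (QuotientGroup.eq_one_iff d).1 hy
  exact D3_le_comap_N0 hd

/-- The kernel claim: elements of `ker Φ` in the image of `ι` lie in `N0`. -/
lemma ker_Phi_sub_N0 {w : FB} (hw : Phi w = 1) (hr : ∃ d : F3, iot d = w) : w ∈ N0 := by
  obtain ⟨d, rfl⟩ := hr
  rw [Phi_iot] at hw
  have h1 : xi1 d = 1 := congrArg WG.l hw
  have h2 : xi2 d = 1 := congrArg WG.r hw
  exact F3_reduction h1 h2

end S7
section S8

abbrev Lt := Bool × Bool

/-- One step of the section computation. -/
def stp : List Lt × List Lt × Bool → Lt → List Lt × List Lt × Bool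
  | S, (true, e) => (S.1 ++ [(false, e)], S.2.1, S.2.2)
  | S, (false, true) => (S.2.1 ++ [(true, true)], S.1, !S.2.2)
  | S, (false, false) => (S.2.1, S.1 ++ [(true, false)], !S.2.2)

def trip (L : List Lt) : List Lt × List Lt × Bool := List.foldl stp ([], [], false) L

lemma mk_singleton_pos (x : Bool) : FreeGroup.mk [(x, true)] = FreeGroup.of x := rfl

lemma mk_singleton_neg (x : Bool) : FreeGroup.mk [(x, false)] = (FreeGroup.of x)⁻¹ := by
  apply eq_inv_of_mul_eq_one_left
  have h : FreeGroup.mk [(x, false)] * FreeGroup.of x = FreeGroup.mk [(x, false), (x, true)] :=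
    FreeGroup.mul_mk
  rw [h, ← FreeGroup.reduce.self (L := [(x, false), (x, true)])]
  simp [FreeGroup.reduce]
  rfl

lemma Phi_mk_singleton (ℓ : Lt) :
    Phi (FreeGroup.mk [ℓ]) =
      match ℓ with
      | (true, true) => ⟨fa, 1, false⟩
      | (true, false) => ⟨fa⁻¹, 1, false⟩
      | (false, true) => ⟨fb, 1, true⟩
      | (false, false) => ⟨1, fb⁻¹, true⟩ := by
  obtain ⟨x, e⟩ := ℓ
  cases x <;> cases e <;>
    simp [mk_singleton_pos, mk_singleton_neg, Phi_fa, Phi_fb, Phi_fa_inv, Phi_fb_inv]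

lemma foldl_corr (L : List Lt) : ∀ (S1 S2 : List Lt) (s : Bool),
    (⟨FreeGroup.mk (List.foldl stp (S1, S2, s) L).1,
      FreeGroup.mk (List.foldl stp (S1, S2, s) L).2.1,
      (List.foldl stp (S1, S2, s) L).2.2⟩ : WG) =
    (⟨FreeGroup.mk S1, FreeGroup.mk S2, s⟩ : WG) * Phi (FreeGroup.mk L) := by
  induction L with
  | nil =>
    intro S1 S2 s
    have h1 : FreeGroup.mk ([] : List Lt) = 1 := by
      rw [← FreeGroup.one_eq_mk]
    rw [List.foldl_nil, h1, map_one, mul_one]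
  | cons ℓ L ih =>
    intro S1 S2 s
    have h1 : FreeGroup.mk (ℓ :: L) = FreeGroup.mk [ℓ] * FreeGroup.mk L := by
      rw [FreeGroup.mul_mk]
      rfl
    rw [List.foldl_cons, h1, map_mul, ← mul_assoc]
    rw [ih]
    congr 1
    obtain ⟨x, e⟩ := ℓ
    cases x <;> cases e <;>
      simp [Phi_mk_singleton, stp, WG.mul_def, WG.inv_def, ← FreeGroup.mul_mk,
        mk_singleton_pos, mk_singleton_neg]

lemma trip_corr (w : FB) :
    Phi w = ⟨FreeGroup.mk (trip w.toWord).1, FreeGroup.mk (trip w.toWord).2.1,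
      (trip w.toWord).2.2⟩ := by
  conv_lhs => rw [← FreeGroup.mk_toWord (x := w)]
  rw [trip, foldl_corr]
  have h1 : FreeGroup.mk ([] : List Lt) = 1 := by rw [← FreeGroup.one_eq_mk]
  have h2 : (⟨FreeGroup.mk [], FreeGroup.mk [], false⟩ : WG) = 1 := by
    rw [h1]; rfl
  rw [h2, one_mul]

lemma foldl_len (L : List Lt) : ∀ (S : List Lt × List Lt × Bool),
    (List.foldl stp S L).1.length + (List.foldl stp S L).2.1.length
      = S.1.length + S.2.1.length + L.length := by
  induction L with
  | nil => intro S; simp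
  | cons ℓ L ih =>
    intro S
    rw [List.foldl_cons, ih]
    obtain ⟨x, e⟩ := ℓ
    cases x <;> cases e <;> simp [stp] <;> omega

/-- The norm of a free group element. -/
def nrm (w : FB) : ℕ := w.toWord.length

lemma nrm_mk_le (L : List Lt) : nrm (FreeGroup.mk L) ≤ L.length := by
  have h := FreeGroup.Red.length_le (FreeGroup.reduce.red (L := L))
  rw [nrm, FreeGroup.toWord_mk]
  exact h

lemma nrm_eq_zero {w : FB} (h : nrm w = 0) : w = 1 := by
  rw [nrm, List.length_eq_zero_iff] at h
  rw [← FreeGroup.mk_toWord (x := w), h, ← FreeGroup.one_eq_mk]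

end S8
section S9

/-- No-cancellation predicate on words. -/
def OkL (p q : Lt) : Prop := ¬(p.1 = q.1 ∧ p.2 = !q.2)

instance : DecidablePred (fun pq : Lt × Lt => OkL pq.1 pq.2) := fun _ => by
  unfold OkL; infer_instance

def RedL (L : List Lt) : Prop := List.Chain' OkL L

lemma redL_of_reduce_eq : ∀ {L : List Lt}, FreeGroup.reduce L = L → RedL L := by
  intro L
  induction L with
  | nil => intro _; exact List.IsChain.nil
  | cons x L ih =>
    intro h
    rw [FreeGroup.reduce.cons] at h
    rcases hr : FreeGroup.reduce L with _ | ⟨hd, tl⟩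
    · rw [hr] at h
      simp only at h
      injection h with h1 h2
      subst h2
      exact List.isChain_singleton x
    · rw [hr] at h
      simp only at h
      by_cases hc : x.1 = hd.1 ∧ x.2 = !hd.2
      · rw [if_pos hc] at h
        exfalso
        have hlen := FreeGroup.Red.length_le (FreeGroup.reduce.red (L := L))
        rw [hr] at hlen
        have e1 : tl.length = L.length + 1 := by rw [h]; simp
        simp only [List.length_cons] at hlen
        omega
      · rw [if_neg hc] at h
        have hL : L = hd :: tl := by
          injection h with h1 h2
          exact h2.symm
        subst hL
        have ihc : RedL (hd :: tl) := ih hr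
        exact List.isChain_cons_cons.2 ⟨hc, ihc⟩

lemma reduce_eq_of_redL : ∀ {L : List Lt}, RedL L → FreeGroup.reduce L = L := by
  intro L
  induction L with
  | nil => intro _; rfl
  | cons x L ih =>
    intro h
    have hL : RedL L := h.tail
    rw [FreeGroup.reduce.cons, ih hL]
    rcases L with _ | ⟨hd, tl⟩
    · rfl
    · have hok : OkL x hd := (List.isChain_cons_cons.1 h).1
      simp only
      rw [if_neg hok]

lemma toWord_redL (w : FB) : RedL w.toWord :=
  redL_of_reduce_eq (FreeGroup.reduce_toWord w)

lemma toWord_mk_of_redL {L : List Lt} (h : RedL L) : (FreeGroup.mk L).toWord = L := by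
  rw [FreeGroup.toWord_mk, reduce_eq_of_redL h]

lemma nrm_mk_of_redL {L : List Lt} (h : RedL L) : nrm (FreeGroup.mk L) = L.length := by
  rw [nrm, toWord_mk_of_redL h]

def allb (M : List Lt) : Prop := ∀ ℓ ∈ M, ℓ.1 = true

/-- conclusion for the `S1 = [], s = false` degenerate case -/
def C3 (L : List Lt) : Prop :=
  L = [] ∨ ∃ M, L = (false, true) :: (M ++ [(false, false)]) ∧ allb M

lemma trip_concat (M : List Lt) (ℓ : Lt) : trip (M ++ [ℓ]) = stp (trip M) ℓ := by
  rw [trip, trip, List.foldl_append, List.foldl_cons, List.foldl_nil]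

lemma degen : ∀ (n : ℕ) (L : List Lt), L.length ≤ n → RedL L →
    (((trip L).2.1 = [] ∧ (trip L).2.2 = false) → allb L) ∧
    (((trip L).1 = [] ∧ (trip L).2.2 = true) →
        ∃ M, L = M ++ [((false : Bool), false)] ∧ allb M) ∧
    (((trip L).2.1 = [] ∧ (trip L).2.2 = true) →
        ∃ M T, L = M ++ (false, true) :: T ∧ C3 M ∧ allb T) ∧
    (((trip L).1 = [] ∧ (trip L).2.2 = false) → C3 L) := by
  intro n
  induction n with
  | zero =>
    intro L hlen _
    have : L = [] := List.length_eq_zero_iff.1 (Nat.le_zero.1 hlen)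
    subst this
    refine ⟨fun _ => ?_, fun h => ?_, fun h => ?_, fun _ => Or.inl rfl⟩
    · intro ℓ hℓ; simp at hℓ
    · exact absurd h.2 (by simp [trip])
    · exact absurd h.2 (by simp [trip])
  | succ n ih =>
    intro L hlen hred
    induction L using List.reverseRecOn with
    | nil =>
      refine ⟨fun _ => ?_, fun h => ?_, fun h => ?_, fun _ => Or.inl rfl⟩
      · intro ℓ hℓ; simp at hℓ
      · exact absurd h.2 (by simp [trip])
      · exact absurd h.2 (by simp [trip])
    | append_singleton M ℓ _ =>
      have hMlen : M.length ≤ n := by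
        rw [List.length_append] at hlen
        simpa using hlen
      have hMred : RedL M := hred.left_of_append
      obtain ⟨ihP1, ihP4, ihP2, ihP3⟩ := ih M hMlen hMred
      rw [trip_concat]
      obtain ⟨x, e⟩ := ℓ
      rcases x with _ | _
      · -- ℓ is an a-letter
        rcases e with _ | _
        · -- ℓ = (false, false) : a⁻¹
          simp only [stp]
          refine ⟨fun h => ?_, fun h => ?_, fun h => ?_, fun h => ?_⟩
          · exact absurd h.1 (by simp)
          · -- P4: final S1 = S2_M = [], s_M = false : from P1(M)
            have hM := ihP1 ⟨h.1, by simpa using h.2⟩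
            exact ⟨M, rfl, hM⟩
          · exact absurd h.1 (by simp)
          · -- P3: final S1 = S2_M = [], s_M = true : from P2(M)
            obtain ⟨M', T, hMeq, hC3, hT⟩ := ihP2 ⟨h.1, by simpa using h.2⟩
            rcases hC3 with h0 | ⟨K, hK, hKb⟩
            · subst h0
              simp only [List.nil_append] at hMeq
              right
              exact ⟨T, by rw [hMeq, List.cons_append], hT⟩
            · exfalso
              -- M' ends with (false,false), followed by (false,true): M is not reduced
              rw [hK] at hMeq
              rw [hMeq] at hMred
              have he : ((false, true) : Lt) :: (K ++ [((false : Bool), false)])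
                  = (((false, true) : Lt) :: K) ++ [((false : Bool), false)] := by simp
              rw [he] at hMred
              have h3 := (List.isChain_append.1 hMred).2.2
              have h4 := h3 (false, false) (by rw [List.getLast?_concat]; rfl)
                (false, true) (by simp)
              exact h4 ⟨rfl, rfl⟩
        · -- ℓ = (false, true) : a
          simp only [stp]
          refine ⟨fun h => ?_, fun h => ?_, fun h => ?_, fun h => ?_⟩
          · -- P1: final S2 = S1_M = [], s_M = true : from P4(M), contradiction
            obtain ⟨M', hMeq, hMb⟩ := ihP4 ⟨h.1, by simpa using h.2⟩
            exfalso
            rw [hMeq] at hred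
            have h3 := (List.isChain_append.1 hred).2.2
            have h4 := h3 (false, false) (by rw [List.getLast?_concat]; rfl)
              (false, true) (by simp)
            exact h4 ⟨rfl, rfl⟩
          · exact absurd h.1 (by simp)
          · -- P2: final S2 = S1_M = [], s_M = false : from P3(M)
            have hM := ihP3 ⟨h.1, by simpa using h.2⟩
            exact ⟨M, [], by simp, hM, fun ℓ hℓ => by simp at hℓ⟩
          · exact absurd h.1 (by simp)
      · -- ℓ is a b-letter (true, e)
        simp only [stp]
        refine ⟨fun h => ?_, fun h => ?_, fun h => ?_, fun h => ?_⟩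
        · -- P1
          have hM := ihP1 ⟨h.1, h.2⟩
          intro p hp
          rcases List.mem_append.1 hp with hp | hp
          · exact hM p hp
          · simp at hp; rw [hp]
        · exact absurd h.1 (by simp)
        · -- P2
          obtain ⟨M', T, hMeq, hC3, hT⟩ := ihP2 ⟨h.1, h.2⟩
          refine ⟨M', T ++ [(true, e)], ?_, hC3, ?_⟩
          · rw [hMeq]; simp
          · intro p hp
            rcases List.mem_append.1 hp with hp | hp
            · exact hT p hp
            · simp at hp; rw [hp]
        · exact absurd h.1 (by simp)

end S9
section S10

lemma allb_uniform : ∀ {L : List Lt}, RedL L → allb L →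
    ∃ (n : ℕ) (e : Bool), L = List.replicate n (true, e) := by
  intro L
  induction L with
  | nil => intro _ _; exact ⟨0, true, rfl⟩
  | cons ℓ L ih =>
    intro h hb
    have hℓ : ℓ.1 = true := hb ℓ List.mem_cons_self
    obtain ⟨x, e⟩ := ℓ
    simp only at hℓ
    subst hℓ
    obtain ⟨n, e', hL⟩ := ih h.tail (fun p hp => hb p (List.mem_cons_of_mem _ hp))
    rcases n with _ | n
    · simp only [List.replicate] at hL
      subst hL
      exact ⟨1, e, rfl⟩
    · have hhd : L = (true, e') :: List.replicate n (true, e') := by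
        rw [hL]; rfl
      have hok : OkL (true, e) (true, e') := by
        rw [hhd] at h
        exact (List.isChain_cons_cons.1 h).1
      have hee : e = e' := by
        rcases e <;> rcases e' <;> simp_all [OkL]
      subst hee
      refine ⟨n + 2, e, ?_⟩
      rw [hL]
      rfl

lemma mk_replicate_pos (n : ℕ) :
    FreeGroup.mk (List.replicate n ((true : Bool), true)) = (FreeGroup.of true) ^ n := by
  apply FreeGroup.toWord_injective
  rw [FreeGroup.toWord_mk, FreeGroup.reduce_replicate, FreeGroup.toWord_of_pow]

lemma mk_replicate_neg (n : ℕ) :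
    FreeGroup.mk (List.replicate n ((true : Bool), false)) = ((FreeGroup.of true) ^ n)⁻¹ := by
  apply FreeGroup.toWord_injective
  rw [FreeGroup.toWord_mk, FreeGroup.reduce_replicate, FreeGroup.toWord_inv,
    FreeGroup.toWord_of_pow]
  simp [FreeGroup.invRev]

lemma tap_nil (f : TA) : tap f [] = [] := List.length_eq_zero_iff.mp (tap_len f [])

lemma pow_ne_one : ∀ n : ℕ, n ≠ 0 → A ^ n ≠ 1 ∧ B ^ n ≠ 1 := by
  intro n
  induction n using Nat.strong_induction_on with
  | _ n ih =>
  intro hn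
  have hA : A ^ n ≠ 1 := by
    rcases Nat.even_or_odd n with ⟨j, hj⟩ | ⟨j, hj⟩
    · -- n = 2j
      have hj0 : j ≠ 0 := by omega
      have hjn : j < n := by omega
      have hAn : A ^ n = Pear false (B ^ j) (B ^ j) := by
        rw [hj, show j + j = 2 * j by ring, A_pow_even]
      intro hone
      rw [hAn] at hone
      exact (ih j hjn hj0).2 (Pear_eq_one hone).2.1
    · -- n = 2j + 1 : compute the action on [false]
      intro hone
      have h1 : tap (A ^ n) [false] = [true] := by
        rw [hj, pow_succ, A_pow_even]
        have h2 : tap A [false] = [true] := by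
          rw [A_eq]
          show tap (Pear true B 1) (false :: []) = [true]
          rw [tap_Pear_cons]
          simp [tap_nil]
        rw [tap_mul, h2]
        show tap (Pear false (B ^ j) (B ^ j)) (true :: []) = [true]
        rw [tap_Pear_cons]
        simp [tap_nil]
      rw [hone] at h1
      simp at h1
  refine ⟨hA, ?_⟩
  intro hone
  rw [B_pow] at hone
  exact hA (Pear_eq_one hone).2.1

lemma phi_allb {L : List Lt} (hred : RedL L) (hb : allb L)
    (h : phiTA (FreeGroup.mk L) = 1) : L = [] := by
  obtain ⟨n, e, rfl⟩ := allb_uniform hred hb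
  rcases Nat.eq_zero_or_pos n with h0 | h0
  · rw [h0]; rfl
  · exfalso
    cases e
    · rw [mk_replicate_neg, map_inv, map_pow, phiTA_fb, inv_eq_one] at h
      exact (pow_ne_one n (by omega)).2 h
    · rw [mk_replicate_pos, map_pow, phiTA_fb] at h
      exact (pow_ne_one n (by omega)).2 h

lemma nrm_mul_le (x y : FB) : nrm (x * y) ≤ nrm x + nrm y := by
  have h := FreeGroup.toWord_mul_sublist x y
  have h2 := h.length_le
  simpa [nrm] using h2

@[simp] lemma WG_inv_s (x : WG) : (x⁻¹).s = x.s := rfl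

lemma Phi_s_mul (x y : FB) : (Phi (x * y)).s = xor (Phi x).s (Phi y).s := by
  rw [map_mul]; rfl

end S10
section S11

lemma mk_cons_split (ℓ : Lt) (T : List Lt) :
    FreeGroup.mk (ℓ :: T) = FreeGroup.mk [ℓ] * FreeGroup.mk T := by
  rw [FreeGroup.mul_mk]
  rfl

lemma iot_x2_pow (e : Bool) :
    iot (if e then x2g else x2g⁻¹) = fa * FreeGroup.mk [(true, e)] * fa⁻¹ := by
  cases e
  · rw [if_neg (by simp), map_inv, iot_x2, mk_singleton_neg]
    group
  · rw [if_pos rfl, iot_x2, mk_singleton_pos]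

lemma iot_conj_neg (e : Bool) :
    iot (x3g⁻¹ * (if e then x2g else x2g⁻¹) * x3g)
      = fa⁻¹ * FreeGroup.mk [(true, e)] * fa := by
  rw [map_mul, map_mul, map_inv, iot_x3, iot_x2_pow]
  group

lemma even_mem_range : ∀ (n : ℕ) (w : FB), nrm w ≤ n → (Phi w).s = false →
    w ∈ iot.range := by
  intro n
  induction n using Nat.strong_induction_on with
  | _ n ih =>
  intro w hlen hs
  rcases hL : w.toWord with _ | ⟨⟨x, e⟩, T⟩
  · have hw : w = 1 := by
      rw [← FreeGroup.mk_toWord (x := w), hL, ← FreeGroup.one_eq_mk]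
    rw [hw]
    exact one_mem _
  · have hw : w = FreeGroup.mk ((x, e) :: T) := by
      rw [← FreeGroup.mk_toWord (x := w), hL]
    have hred : RedL ((x, e) :: T) := by
      rw [← hL]; exact toWord_redL w
    have hnw : nrm w = T.length + 1 := by
      rw [nrm, hL]; simp
    rcases x with _ | _
    · -- head letter is a^{±1}
      rcases hT : T with _ | ⟨⟨x', e'⟩, T2⟩
      · -- w = a^{±1} : twist contradiction
        exfalso
        rw [hw, hT] at hs
        cases e <;> simp [Phi_mk_singleton, mk_singleton_pos, mk_singleton_neg] at hs
      · subst hT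
        rcases x' with _ | _
        · -- second letter also a-type: must have same sign; w = a^{±2} * rest
          have hok : OkL (false, e) (false, e') := (List.isChain_cons_cons.1 hred).1
          have hee : e = e' := by rcases e <;> rcases e' <;> simp_all [OkL]
          subst hee
          have hsplit : w = (FreeGroup.mk [((false : Bool), e)] *
              FreeGroup.mk [((false : Bool), e)]) * FreeGroup.mk T2 := by
            rw [hw, mk_cons_split ((false : Bool), e) (((false : Bool), e) :: T2),
              mk_cons_split ((false : Bool), e) T2]
            group
          have hgen : FreeGroup.mk [((false : Bool), e)] * FreeGroup.mk [((false : Bool), e)]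
              ∈ iot.range := by
            cases e
            · refine ⟨x3g⁻¹, ?_⟩
              rw [map_inv, iot_x3, mk_singleton_neg]
              group
            · refine ⟨x3g, ?_⟩
              rw [iot_x3, mk_singleton_pos]
          have hred2 : RedL T2 := hred.tail.tail
          have hT2n : nrm (FreeGroup.mk T2) = T2.length := nrm_mk_of_redL hred2
          have hT2lt : nrm (FreeGroup.mk T2) < n := by
            rw [hT2n]
            have := hnw
            simp at this
            omega
          have hT2s : (Phi (FreeGroup.mk T2)).s = false := by
            rw [hw, mk_cons_split ((false : Bool), e) (((false : Bool), e) :: T2),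
              mk_cons_split ((false : Bool), e) T2] at hs
            rw [Phi_s_mul, Phi_s_mul] at hs
            cases e <;>
              simp [Phi_mk_singleton, mk_singleton_pos, mk_singleton_neg] at hs <;>
              simpa using hs
          have hmem2 := ih _ hT2lt (FreeGroup.mk T2) le_rfl hT2s
          rw [hsplit]
          exact mul_mem hgen hmem2
        · -- second letter is b^{±1}: w = (a^{σ} b^{e'} a^{-σ}) * (a^{σ} * rest)
          set w' : FB := FreeGroup.mk [((false : Bool), e)] * FreeGroup.mk T2 with hw'
          have hsplit : w = (FreeGroup.mk [((false : Bool), e)] *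
              FreeGroup.mk [((true : Bool), e')] * (FreeGroup.mk [((false : Bool), e)])⁻¹) * w' := by
            rw [hw, mk_cons_split ((false : Bool), e) (((true : Bool), e') :: T2),
              mk_cons_split ((true : Bool), e') T2, hw']
            group
          have hgen : FreeGroup.mk [((false : Bool), e)] * FreeGroup.mk [((true : Bool), e')] *
              (FreeGroup.mk [((false : Bool), e)])⁻¹ ∈ iot.range := by
            cases e
            · refine ⟨x3g⁻¹ * (if e' then x2g else x2g⁻¹) * x3g, ?_⟩
              rw [iot_conj_neg, mk_singleton_neg]
              group
            · refine ⟨(if e' then x2g else x2g⁻¹), ?_⟩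
              rw [iot_x2_pow, mk_singleton_pos]
          have hred2 : RedL T2 := hred.tail.tail
          have hT2n : nrm (FreeGroup.mk T2) = T2.length := nrm_mk_of_redL hred2
          have hw'lt : nrm w' < n := by
            have h1 : nrm w' ≤ 1 + T2.length := by
              rw [hw']
              have := nrm_mul_le (FreeGroup.mk [((false : Bool), e)]) (FreeGroup.mk T2)
              have h2 : nrm (FreeGroup.mk [((false : Bool), e)]) ≤ 1 := nrm_mk_le _
              rw [hT2n] at this
              omega
            have := hnw
            simp at this
            omega
          have hT2s : (Phi (FreeGroup.mk T2)).s = true := by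
            rw [hw, mk_cons_split ((false : Bool), e) (((true : Bool), e') :: T2),
              mk_cons_split ((true : Bool), e') T2] at hs
            rw [Phi_s_mul, Phi_s_mul] at hs
            cases e <;> cases e' <;>
              simp [Phi_mk_singleton, mk_singleton_pos, mk_singleton_neg] at hs <;>
              simpa using hs
          have hw's : (Phi w').s = false := by
            rw [hw', Phi_s_mul, hT2s]
            cases e <;> simp [Phi_mk_singleton, mk_singleton_pos, mk_singleton_neg]
          have hmem2 := ih _ hw'lt w' le_rfl hw's
          rw [hsplit]
          exact mul_mem hgen hmem2
    · -- head letter is b^{±1}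
      have hgen : FreeGroup.mk [((true : Bool), e)] ∈ iot.range := by
        cases e
        · exact ⟨x1g⁻¹, by rw [map_inv, iot_x1, mk_singleton_neg]⟩
        · exact ⟨x1g, by rw [iot_x1, mk_singleton_pos]⟩
      have hredT : RedL T := hred.tail
      have hTn : nrm (FreeGroup.mk T) = T.length := nrm_mk_of_redL hredT
      have hTlt : nrm (FreeGroup.mk T) < n := by
        rw [hTn]; omega
      have hTs : (Phi (FreeGroup.mk T)).s = false := by
        rw [hw, mk_cons_split ((true : Bool), e) T, Phi_s_mul] at hs
        cases e <;>
          simp [Phi_mk_singleton, mk_singleton_pos, mk_singleton_neg] at hs <;>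
          simpa using hs
      have hmem2 := ih _ hTlt (FreeGroup.mk T) le_rfl hTs
      rw [hw, mk_cons_split ((true : Bool), e) T]
      exact mul_mem hgen hmem2

end S11
section S12

lemma sq_eq (x : FB) : x * x = x ^ 2 := by rw [pow_two]

lemma sigF_rels {r : FB} (hr : r ∈ rels) : sigF r ∈ rels := by
  obtain ⟨k, hk | hk⟩ := hr
  · refine ⟨k, Or.inr ?_⟩
    subst hk
    simp only [map_pcomm, map_pow, sigF_fa, sigF_fb]
    rw [sq_eq, ← pow_mul]
  · refine ⟨k + 1, Or.inl ?_⟩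
    subst hk
    simp only [map_pcomm, map_pow, sigF_fa, sigF_fb]
    rw [sq_eq, ← pow_mul]
    have h : 2 ^ (k + 1) = 2 * 2 ^ k := by ring
    rw [h]

lemma sigF_N0 {x : FB} (hx : x ∈ N0) : sigF x ∈ N0 := by
  have hle : N0 ≤ N0.comap sigF := by
    haveI : (N0.comap sigF).Normal := Subgroup.normalClosure_normal.comap sigF
    apply Subgroup.normalClosure_le_normal
    intro r hr
    exact Subgroup.subset_normalClosure (sigF_rels hr)
  exact hle hx

lemma delF_N0 {x : FB} (hx : x ∈ N0) : delF x = 1 := by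
  have hle : N0 ≤ delF.ker := by
    apply Subgroup.normalClosure_le_normal
    rintro r ⟨k, hk | hk⟩ <;> subst hk <;>
      simp [MonoidHom.mem_ker, map_pcomm, map_pow]
  exact hle hx

lemma N0_le_ker_phiTA : N0 ≤ phiTA.ker := by
  apply Subgroup.normalClosure_le_normal
  rintro r ⟨k, hk | hk⟩ <;> subst hk
  · simp only [SetLike.mem_coe, MonoidHom.mem_ker, map_pcomm, map_pow, phiTA_fa, phiTA_fb]
    exact rel1_hold k
  · simp only [SetLike.mem_coe, MonoidHom.mem_ker, map_pcomm, map_pow, phiTA_fa, phiTA_fb]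
    exact rel2_hold k

lemma descent_phi {h0 h1 w : FB} (hw : Phi w = ⟨h0, h1, false⟩)
    (hd0 : delF h0 = 1) (hd1 : delF h1 = 1) :
    Phi ((sigF h1)⁻¹ * fa * (sigF h0)⁻¹ * w * fa⁻¹) = 1 := by
  simp only [map_mul, map_inv, Phi_sigF, hw, hd0, hd1, Phi_fa]
  show (⟨h1, 1, false⟩ : WG)⁻¹ * ⟨fb, 1, true⟩ * (⟨h0, 1, false⟩ : WG)⁻¹ * ⟨h0, h1, false⟩ *
      (⟨fb, 1, true⟩ : WG)⁻¹ = 1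
  rw [WG.inv_def, WG.inv_def, WG.inv_def]
  simp only [WG.mul_def, WG.one_def]
  simp

theorem ker_phiTA_main : ∀ (n : ℕ) (w : FB), nrm w ≤ n → phiTA w = 1 → w ∈ N0 := by
  intro n
  induction n using Nat.strong_induction_on with
  | _ n ih =>
  intro w hlen hone
  rcases hT : trip w.toWord with ⟨S1, S2, s⟩
  have hcomp : Phi w = ⟨FreeGroup.mk S1, FreeGroup.mk S2, s⟩ := by
    rw [trip_corr w, hT]
  obtain ⟨hs, hl, hr⟩ := phiTA_trivial_parts hone
  rw [hcomp] at hs hl hr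
  simp only at hs hl hr
  subst hs
  have hlen2 : S1.length + S2.length = w.toWord.length := by
    have := foldl_len w.toWord ([], [], false)
    rw [show List.foldl stp ([], [], false) w.toWord = trip w.toWord from rfl, hT] at this
    simpa using this
  have hred : RedL w.toWord := toWord_redL w
  have hwmk : FreeGroup.mk w.toWord = w := FreeGroup.mk_toWord
  by_cases hc : nrm (FreeGroup.mk S1) < nrm w ∧ nrm (FreeGroup.mk S2) < nrm w
  · -- descent case
    have hm0 : FreeGroup.mk S1 ∈ N0 :=
      ih (nrm (FreeGroup.mk S1)) (lt_of_lt_of_le hc.1 hlen) _ le_rfl hl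
    have hm1 : FreeGroup.mk S2 ∈ N0 :=
      ih (nrm (FreeGroup.mk S2)) (lt_of_lt_of_le hc.2 hlen) _ le_rfl hr
    set h0 := FreeGroup.mk S1
    set h1 := FreeGroup.mk S2
    set g2 := (sigF h1)⁻¹ * fa * (sigF h0)⁻¹ * w * fa⁻¹ with hg2def
    have hg2phi : Phi g2 = 1 := descent_phi hcomp (delF_N0 hm0) (delF_N0 hm1)
    have hg2mem : g2 ∈ N0 := by
      apply ker_Phi_sub_N0 hg2phi
      have := even_mem_range (nrm g2) g2 le_rfl (by rw [hg2phi]; rfl)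
      simpa [MonoidHom.mem_range] using this
    have hfact : w = sigF h0 * (fa⁻¹ * (sigF h1 * g2) * fa) := by
      rw [hg2def]
      group
    rw [hfact]
    exact mul_mem (sigF_N0 hm0)
      (Subgroup.normalClosure_normal.conj_mem _ (mul_mem (sigF_N0 hm1) hg2mem) fa⁻¹)
  · -- degenerate case
    rw [not_and_or] at hc
    have hn1 : nrm (FreeGroup.mk S1) ≤ S1.length := nrm_mk_le S1
    have hn2 : nrm (FreeGroup.mk S2) ≤ S2.length := nrm_mk_le S2
    have hnw : nrm w = w.toWord.length := rfl
    rcases hc with hc | hc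
    · -- S2 must be empty; i.e. w is a power of b; so w = 1
      have hS2 : S2 = [] := by
        rw [not_lt] at hc
        apply List.length_eq_zero_iff.1
        omega
      have hP1 := (degen w.toWord.length w.toWord le_rfl hred).1
      rw [hT] at hP1
      have hball : allb w.toWord := hP1 ⟨by rw [hS2], rfl⟩
      have hLnil : w.toWord = [] := by
        apply phi_allb hred hball
        rw [hwmk]
        exact hone
      have : w = 1 := by rw [← hwmk, hLnil, ← FreeGroup.one_eq_mk]
      rw [this]
      exact one_mem _
    · -- S1 must be empty; w = 1 or w = a b^k a⁻¹
      have hS1 : S1 = [] := by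
        rw [not_lt] at hc
        apply List.length_eq_zero_iff.1
        omega
      have hP3 := (degen w.toWord.length w.toWord le_rfl hred).2.2.2
      rw [hT] at hP3
      have hc3 : C3 w.toWord := hP3 ⟨by rw [hS1], rfl⟩
      rcases hc3 with hnil | ⟨M, hM, hMb⟩
      · have : w = 1 := by rw [← hwmk, hnil, ← FreeGroup.one_eq_mk]
        rw [this]
        exact one_mem _
      · -- w = a * mk M * a⁻¹ with φ(mk M)=1, M reduced all-b ⇒ M = [] ⇒ w = 1
        have hsplit : w = fa * FreeGroup.mk M * fa⁻¹ := by
          rw [← hwmk, hM, mk_cons_split ((false : Bool), true) (M ++ [((false : Bool), false)])]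
          rw [show FreeGroup.mk (M ++ [((false : Bool), false)])
              = FreeGroup.mk M * FreeGroup.mk [((false : Bool), false)] from
            (FreeGroup.mul_mk).symm]
          rw [mk_singleton_pos, mk_singleton_neg]
          group
        have hMred : RedL M := by
          rw [hM] at hred
          have h2 := hred.tail
          exact h2.left_of_append
        have hphiM : phiTA (FreeGroup.mk M) = 1 := by
          rw [hsplit] at hone
          rw [map_mul, map_mul, map_inv, phiTA_fa] at hone
          have := congrArg (fun z => A⁻¹ * z * A) hone
          simpa [mul_assoc] using this
        have hMnil : M = [] := phi_allb hMred hMb hphiM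
        have : w = 1 := by
          rw [hsplit, hMnil, ← FreeGroup.one_eq_mk]
          group
        rw [this]
        exact one_mem _

lemma range_f_eq : Set.range (fun x : Bool => cond x B A) = {A, B} := by
  ext y
  constructor
  · rintro ⟨x, rfl⟩
    cases x
    · exact Or.inl rfl
    · exact Or.inr rfl
  · rintro (rfl | rfl)
    · exact ⟨false, rfl⟩
    · exact ⟨true, rfl⟩

lemma phiTA_range_eq : phiTA.range = G := by
  rw [phiTA, FreeGroup.range_lift_eq_closure, range_f_eq]
  rfl

lemma phiTA_mem_G (w : FB) : phiTA w ∈ G := by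
  rw [← phiTA_range_eq]
  exact ⟨w, rfl⟩

def thetaG : FB →* ↥G := phiTA.codRestrict G phiTA_mem_G

lemma thetaG_ker : Subgroup.normalClosure rels ≤ thetaG.ker := by
  intro x hx
  rw [MonoidHom.mem_ker]
  apply Subtype.ext
  show phiTA x = 1
  exact N0_le_ker_phiTA hx

end S12

/-- `G` has the presentation
`⟨A, B | [[Aᵖ,Bᵖ],Bᵖ], [[Bᵖ,A²ᵖ],A²ᵖ] (p = 2ᵏ, k ≥ 0)⟩`, via `A ↦ a`, `B ↦ b`. -/
theorem G_presentation :
    ∃ e : PresentedGroup rels ≃* G,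
      e (PresentedGroup.of false) = AG ∧ e (PresentedGroup.of true) = BG := by
  have hker : Subgroup.normalClosure rels ≤ thetaG.ker := thetaG_ker
  let φP : PresentedGroup rels →* ↥G := QuotientGroup.lift (Subgroup.normalClosure rels)
    thetaG hker
  have hinj : Function.Injective φP := by
    rw [injective_iff_map_eq_one]
    intro z hz
    induction z using QuotientGroup.induction_on with
    | H w =>
      have h1 : thetaG w = 1 := hz
      have h2 : phiTA w = 1 := by
        have := congrArg (Subtype.val) h1
        exact this
      have h3 : w ∈ N0 := ker_phiTA_main (nrm w) w le_rfl h2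
      exact (QuotientGroup.eq_one_iff w).2 h3
  have hsurj : Function.Surjective φP := by
    intro g
    have hg : (g : TA) ∈ phiTA.range := by
      rw [phiTA_range_eq]
      exact g.2
    obtain ⟨w, hw⟩ := hg
    refine ⟨QuotientGroup.mk w, ?_⟩
    apply Subtype.ext
    exact hw
  refine ⟨MulEquiv.ofBijective φP ⟨hinj, hsurj⟩, ?_, ?_⟩
  · apply Subtype.ext
    show phiTA (FreeGroup.of false) = A
    simp [phiTA]
  · apply Subtype.ext
    show phiTA (FreeGroup.of true) = B
    simp [phiTA]
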